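/- Assume H1, H2 and λ ≥ ‖∇L^Π(X̄)‖_{σ,∞}. Then the estimator X̌ satisfies the oracle inequality D̄^Π(X̌‖X̄) ≤ inf_{X ∈ ℝ^{m₁×m₂}, ‖X‖_∞ ≤ γ} ( D̄^Π(X‖X̄) + 2λ‖X‖_{σ,1} ). -/

import Mathlib

open MeasureTheory ProbabilityTheory Matrix

/-- Singular values of a rectangular real matrix: square roots of the
eigenvalues of `Xᵀ * X`. -/
noncomputable def singVals {m₁ m₂ : ℕ} (X : Matrix (Fin m₁) (Fin m₂) ℝ) : Fin m₂ → ℝ :=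
  fun i => Real.sqrt (((show (Xᵀ * X).IsHermitian by
    rw [← Matrix.conjTranspose_eq_transpose_of_trivial]
    exact Matrix.isHermitian_conjTranspose_mul_self X)).eigenvalues i)

/-- Nuclear (Schatten-1) norm `‖·‖_{σ,1}`. -/
noncomputable def nucNorm {m₁ m₂ : ℕ} (X : Matrix (Fin m₁) (Fin m₂) ℝ) : ℝ :=
  ∑ i, singVals X i

/-- Operator (Schatten-∞) norm `‖·‖_{σ,∞}`: the largest singular value. -/
noncomputable def opNorm {m₁ m₂ : ℕ} (X : Matrix (Fin m₁) (Fin m₂) ℝ) : ℝ :=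
  ⨆ i, singVals X i

/-- Frobenius (Schatten-2) norm `‖·‖_{σ,2}`. -/
noncomputable def frobNorm {m₁ m₂ : ℕ} (X : Matrix (Fin m₁) (Fin m₂) ℝ) : ℝ :=
  Real.sqrt (∑ k, ∑ l, (X k l) ^ 2)

/-- Entrywise sup norm `‖·‖_∞`. -/
noncomputable def linfNorm {m₁ m₂ : ℕ} (X : Matrix (Fin m₁) (Fin m₂) ℝ) : ℝ :=
  ⨆ p : Fin m₁ × Fin m₂, |X p.1 p.2|

/-- Bregman divergence of `G` (equal to the Kullback-Leibler divergence for
natural exponential families): `D_G(x‖x') = G x - G x' - G'(x')(x - x')`. -/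
noncomputable def breg (G G' : ℝ → ℝ) (x x' : ℝ) : ℝ :=
  G x - G x' - G' x' * (x - x')

/-- Integrated Bregman (Kullback-Leibler) divergence
`D̄^Π(X¹‖X²) = Σ_{k,l} π_{k,l} D_G(X¹_{k,l}‖X²_{k,l})`. -/
noncomputable def bregPi {m₁ m₂ : ℕ} (π : Fin m₁ × Fin m₂ → ℝ) (G G' : ℝ → ℝ)
    (X1 X2 : Matrix (Fin m₁) (Fin m₂) ℝ) : ℝ :=
  ∑ p : Fin m₁ × Fin m₂, π p * breg G G' (X1 p.1 p.2) (X2 p.1 p.2)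

/-- Known-sampling objective `L^Π(X) = G^Π(X) - (1/n) Σ_i X_{ω_i} Y_i`, where
`G^Π(X) = Σ_{k,l} π_{k,l} G(X_{k,l})`. -/
noncomputable def LPi {m₁ m₂ n : ℕ} (π : Fin m₁ × Fin m₂ → ℝ) (G : ℝ → ℝ)
    (idx : Fin n → Fin m₁ × Fin m₂) (Y : Fin n → ℝ)
    (X : Matrix (Fin m₁) (Fin m₂) ℝ) : ℝ :=
  (∑ p : Fin m₁ × Fin m₂, π p * G (X p.1 p.2)) -
    (n : ℝ)⁻¹ * ∑ i, X (idx i).1 (idx i).2 * Y i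

/-- Gradient of `L^Π` at `X̄`:
`∇L^Π(X̄) = ∇G^Π(X̄) - (1/n) Σ_i Y_i E_i = (1/n) Σ_i (Y_i E_i - E[Y_i E_i])` up to sign,
where `(∇G^Π(X̄))_{k,l} = π_{k,l} G'(X̄_{k,l})`. -/
noncomputable def gradLPi {m₁ m₂ n : ℕ} (π : Fin m₁ × Fin m₂ → ℝ) (G' : ℝ → ℝ)
    (idx : Fin n → Fin m₁ × Fin m₂) (Y : Fin n → ℝ)
    (Xb : Matrix (Fin m₁) (Fin m₂) ℝ) : Matrix (Fin m₁) (Fin m₂) ℝ :=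
  (Matrix.of fun k l => π (k, l) * G' (Xb k l)) -
    (n : ℝ)⁻¹ • ∑ i, Y i • Matrix.single (idx i).1 (idx i).2 (1 : ℝ)


open scoped RealInnerProductSpace

/-!
The first-order expansion of `L^Π` at `X̄` has the Bregman divergence as its exact remainder,
`L^Π(X) - L^Π(X̄) = D̄^Π(X‖X̄) + ⟨∇L^Π(X̄), X - X̄⟩`. Comparing the expansions at `X̌` and at a
competitor `X` with the minimality of `X̌` gives
`D̄^Π(X̌‖X̄) ≤ D̄^Π(X‖X̄) + ⟨∇L^Π(X̄), X - X̌⟩ + λ‖X‖_{σ,1} - λ‖X̌‖_{σ,1}`, and trace duality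
`|⟨A, B⟩| ≤ ‖A‖_{σ,∞} ‖B‖_{σ,1}` together with `λ ≥ ‖∇L^Π(X̄)‖_{σ,∞}` bounds the inner product
by `λ‖X‖_{σ,1} + λ‖X̌‖_{σ,1}`.

Trace duality comes from expanding `⟨A, B⟩ = Σ_j ⟨A v_j, B v_j⟩` in an orthonormal eigenbasis
`(v_j)` of `BᵀB`: there `‖B v_j‖` is the `j`-th singular value of `B`, while `‖A v_j‖ ≤ ‖A‖_{σ,∞}`.
-/

section FrobeniusInner

variable {m n : Type*} [Fintype m] [Fintype n]

def frobInner (A B : Matrix m n ℝ) : ℝ :=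
  ∑ p : m × n, A p.1 p.2 * B p.1 p.2

lemma frobInner_sub_right (A B C : Matrix m n ℝ) :
    frobInner A (B - C) = frobInner A B - frobInner A C := by
  simp only [frobInner, Matrix.sub_apply, mul_sub, Finset.sum_sub_distrib]

lemma frobInner_eq_sum_inner [DecidableEq n] {ι : Type*} [Fintype ι] (A B : Matrix m n ℝ)
    (b : OrthonormalBasis ι ℝ (EuclideanSpace ℝ n)) :
    frobInner A B = ∑ j, ⟪toEuclideanLin A (b j), toEuclideanLin B (b j)⟫ := by
  have hrow : ∀ (M : Matrix m n ℝ) (v : EuclideanSpace ℝ n) k,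
      (M *ᵥ v) k = ⟪WithLp.toLp 2 (M k), v⟫ := by
    intro M v k
    simp [mulVec, dotProduct, PiLp.inner_apply, mul_comm]
  calc frobInner A B = ∑ k, ⟪WithLp.toLp 2 (A k), WithLp.toLp 2 (B k)⟫ := by
        simp [frobInner, Fintype.sum_prod_type, PiLp.inner_apply, mul_comm]
    _ = ∑ k, ∑ j, ⟪WithLp.toLp 2 (A k), b j⟫ * ⟪b j, WithLp.toLp 2 (B k)⟫ := by
        simp_rw [b.sum_inner_mul_inner]
    _ = ∑ j, ∑ k, (A *ᵥ b j) k * (B *ᵥ b j) k := by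
        rw [Finset.sum_comm]
        simp_rw [hrow, real_inner_comm (b _)]
    _ = ∑ j, ⟪toEuclideanLin A (b j), toEuclideanLin B (b j)⟫ := by
        simp [PiLp.inner_apply, toLpLin_apply, mul_comm]

end FrobeniusInner

section SpectralBounds

variable {m n : Type*} [Fintype m] [Fintype n] [DecidableEq n]

lemma norm_toEuclideanLin_sq (A : Matrix m n ℝ) (x : EuclideanSpace ℝ n) :
    ‖toEuclideanLin A x‖ ^ 2 = ⟪x, toEuclideanLin (Aᴴ * A) x⟫ := by
  classical
  have hcomp : toEuclideanLin (Aᴴ * A) x = toEuclideanLin Aᴴ (toEuclideanLin A x) := by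
    simp [toLpLin_apply]
  rw [hcomp, toEuclideanLin_conjTranspose_eq_adjoint, LinearMap.adjoint_inner_right,
    real_inner_self_eq_norm_sq]

lemma toEuclideanLin_eigenvectorBasis {B : Matrix n n ℝ} (hB : B.IsHermitian) (j : n) :
    toEuclideanLin B (hB.eigenvectorBasis j) = hB.eigenvalues j • hB.eigenvectorBasis j := by
  rw [toLpLin_apply, hB.mulVec_eigenvectorBasis]
  rfl

lemma norm_toEuclideanLin_sq_eq_sum (A : Matrix m n ℝ) (x : EuclideanSpace ℝ n) :
    ‖toEuclideanLin A x‖ ^ 2 = ∑ j, A.isHermitian_conjTranspose_mul_self.eigenvalues j *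
      ⟪A.isHermitian_conjTranspose_mul_self.eigenvectorBasis j, x⟫ ^ 2 := by
  set H := A.isHermitian_conjTranspose_mul_self
  rw [norm_toEuclideanLin_sq, ← H.eigenvectorBasis.sum_inner_mul_inner]
  refine Finset.sum_congr rfl fun j _ => ?_
  rw [← isSymmetric_toEuclideanLin_iff.mpr H, toEuclideanLin_eigenvectorBasis,
    real_inner_smul_left, real_inner_comm x]
  ring

lemma norm_toEuclideanLin_eigenvectorBasis_sq (A : Matrix m n ℝ) (j : n) :
    ‖toEuclideanLin A (A.isHermitian_conjTranspose_mul_self.eigenvectorBasis j)‖ ^ 2 =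
      A.isHermitian_conjTranspose_mul_self.eigenvalues j := by
  rw [norm_toEuclideanLin_sq, toEuclideanLin_eigenvectorBasis, real_inner_smul_right,
    real_inner_self_eq_norm_sq, OrthonormalBasis.norm_eq_one, one_pow, mul_one]

end SpectralBounds

section SchattenDuality

variable {m₁ m₂ : ℕ}

lemma singVals_nonneg (A : Matrix (Fin m₁) (Fin m₂) ℝ) (j : Fin m₂) : 0 ≤ singVals A j :=
  Real.sqrt_nonneg _

lemma singVals_le_opNorm (A : Matrix (Fin m₁) (Fin m₂) ℝ) (j : Fin m₂) :
    singVals A j ≤ opNorm A :=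
  le_ciSup (Set.finite_range _).bddAbove j

lemma opNorm_nonneg (A : Matrix (Fin m₁) (Fin m₂) ℝ) : 0 ≤ opNorm A :=
  Real.iSup_nonneg (singVals_nonneg A)

lemma nucNorm_nonneg (A : Matrix (Fin m₁) (Fin m₂) ℝ) : 0 ≤ nucNorm A :=
  Finset.sum_nonneg fun j _ => singVals_nonneg A j

lemma sq_singVals (A : Matrix (Fin m₁) (Fin m₂) ℝ) (j : Fin m₂) :
    singVals A j ^ 2 = A.isHermitian_conjTranspose_mul_self.eigenvalues j :=
  Real.sq_sqrt (eigenvalues_conjTranspose_mul_self_nonneg A j)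

lemma norm_toEuclideanLin_eigenvectorBasis (A : Matrix (Fin m₁) (Fin m₂) ℝ) (j : Fin m₂) :
    ‖toEuclideanLin A (A.isHermitian_conjTranspose_mul_self.eigenvectorBasis j)‖ =
      singVals A j := by
  rw [← sq_eq_sq₀ (norm_nonneg _) (singVals_nonneg A j), sq_singVals,
    norm_toEuclideanLin_eigenvectorBasis_sq]

lemma norm_toEuclideanLin_le_opNorm (A : Matrix (Fin m₁) (Fin m₂) ℝ)
    (x : EuclideanSpace ℝ (Fin m₂)) : ‖toEuclideanLin A x‖ ≤ opNorm A * ‖x‖ := by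
  set H := A.isHermitian_conjTranspose_mul_self
  have heig : ∀ j, H.eigenvalues j ≤ opNorm A ^ 2 := fun j => by
    rw [← sq_singVals]
    exact pow_le_pow_left₀ (singVals_nonneg A j) (singVals_le_opNorm A j) 2
  have hsq : ‖toEuclideanLin A x‖ ^ 2 ≤ (opNorm A * ‖x‖) ^ 2 :=
    calc ‖toEuclideanLin A x‖ ^ 2 = ∑ j, H.eigenvalues j * ⟪H.eigenvectorBasis j, x⟫ ^ 2 :=
          norm_toEuclideanLin_sq_eq_sum A x
      _ ≤ ∑ j, opNorm A ^ 2 * ⟪H.eigenvectorBasis j, x⟫ ^ 2 := by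
          gcongr with j
          exact heig j
      _ = (opNorm A * ‖x‖) ^ 2 := by
          rw [← Finset.mul_sum, H.eigenvectorBasis.sum_sq_inner_right, mul_pow]
  exact le_of_sq_le_sq hsq (mul_nonneg (opNorm_nonneg A) (norm_nonneg x))

lemma abs_frobInner_le_opNorm_mul_nucNorm (A B : Matrix (Fin m₁) (Fin m₂) ℝ) :
    |frobInner A B| ≤ opNorm A * nucNorm B := by
  set b := B.isHermitian_conjTranspose_mul_self.eigenvectorBasis
  calc |frobInner A B| = |∑ j, ⟪toEuclideanLin A (b j), toEuclideanLin B (b j)⟫| := by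
        rw [frobInner_eq_sum_inner A B b]
    _ ≤ ∑ j, ‖toEuclideanLin A (b j)‖ * ‖toEuclideanLin B (b j)‖ :=
        (Finset.abs_sum_le_sum_abs _ _).trans
          (Finset.sum_le_sum fun j _ => abs_real_inner_le_norm _ _)
    _ ≤ ∑ j, opNorm A * singVals B j := by
        gcongr with j
        · exact opNorm_nonneg A
        · simpa only [b.norm_eq_one, mul_one] using norm_toEuclideanLin_le_opNorm A (b j)
        · exact (norm_toEuclideanLin_eigenvectorBasis B j).le
    _ = opNorm A * nucNorm B := (Finset.mul_sum _ _ _).symm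

end SchattenDuality

section BregmanExpansion

variable {m₁ m₂ n : ℕ} (π : Fin m₁ × Fin m₂ → ℝ) (G G' : ℝ → ℝ)
  (idx : Fin n → Fin m₁ × Fin m₂) (Y : Fin n → ℝ)

lemma frobInner_gradLPi (Xb M : Matrix (Fin m₁) (Fin m₂) ℝ) :
    frobInner (gradLPi π G' idx Y Xb) M = ∑ p, π p * G' (Xb p.1 p.2) * M p.1 p.2 -
      (n : ℝ)⁻¹ * ∑ i, Y i * M (idx i).1 (idx i).2 := by
  simp only [frobInner, gradLPi, smul_single, smul_eq_mul, mul_one, Matrix.sub_apply, of_apply,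
    Prod.mk.eta, Matrix.smul_apply, Matrix.sum_apply, single_apply, Finset.mul_sum, mul_ite,
    mul_zero, sub_mul, Finset.sum_mul, ite_mul, zero_mul, Finset.sum_sub_distrib, sub_right_inj]
  rw [Finset.sum_comm]
  simp [← Prod.ext_iff, mul_assoc]

lemma LPi_sub_LPi_eq_bregPi_add_frobInner (X Xb : Matrix (Fin m₁) (Fin m₂) ℝ) :
    LPi π G idx Y X - LPi π G idx Y Xb =
      bregPi π G G' X Xb + frobInner (gradLPi π G' idx Y Xb) (X - Xb) := by
  have hpop : ∑ p, π p * G (X p.1 p.2) - ∑ p, π p * G (Xb p.1 p.2) =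
      bregPi π G G' X Xb + ∑ p, π p * G' (Xb p.1 p.2) * (X - Xb) p.1 p.2 := by
    rw [bregPi, ← Finset.sum_sub_distrib, ← Finset.sum_add_distrib]
    refine Finset.sum_congr rfl fun p _ => ?_
    rw [breg, Matrix.sub_apply]
    ring
  have hsample : ∑ i, Y i * (X - Xb) (idx i).1 (idx i).2 =
      ∑ i, X (idx i).1 (idx i).2 * Y i - ∑ i, Xb (idx i).1 (idx i).2 * Y i := by
    rw [← Finset.sum_sub_distrib]
    refine Finset.sum_congr rfl fun i _ => ?_
    rw [Matrix.sub_apply]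
    ring
  rw [frobInner_gradLPi, LPi, LPi]
  linear_combination hpop + (n : ℝ)⁻¹ * hsample

end BregmanExpansion

theorem oracle_ineq_KL_general (m₁ m₂ n : ℕ) (γ lam : ℝ)
    (G G' : ℝ → ℝ) (π : Fin m₁ × Fin m₂ → ℝ)
    (idx : Fin n → Fin m₁ × Fin m₂) (Y : Fin n → ℝ)
    (Xb Xc : Matrix (Fin m₁) (Fin m₂) ℝ)
    -- λ dominates the operator norm of the gradient of L^Π at X̄
    (hlam : opNorm (gradLPi π G' idx Y Xb) ≤ lam)
    -- X̌ minimizes X ↦ L^Π(X) + λ‖X‖_{σ,1} over {‖X‖_∞ ≤ γ}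
    (hmin : ∀ X : Matrix (Fin m₁) (Fin m₂) ℝ, linfNorm X ≤ γ →
      LPi π G idx Y Xc + lam * nucNorm Xc ≤ LPi π G idx Y X + lam * nucNorm X) :
    ∀ X : Matrix (Fin m₁) (Fin m₂) ℝ, linfNorm X ≤ γ →
      bregPi π G G' Xc Xb ≤ bregPi π G G' X Xb + 2 * lam * nucNorm X := by
  intro X hX
  set g := gradLPi π G' idx Y Xb
  have hdual : ∀ M, |frobInner g M| ≤ lam * nucNorm M := fun M =>
    (abs_frobInner_le_opNorm_mul_nucNorm g M).trans
      (mul_le_mul_of_nonneg_right hlam (nucNorm_nonneg M))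
  have hexpX := LPi_sub_LPi_eq_bregPi_add_frobInner π G G' idx Y X Xb
  have hexpXc := LPi_sub_LPi_eq_bregPi_add_frobInner π G G' idx Y Xc Xb
  rw [frobInner_sub_right] at hexpX hexpXc
  linarith [hmin X hX, hdual X, hdual Xc, le_abs_self (frobInner g X),
    neg_abs_le (frobInner g Xc)]

theorem oracle_ineq_KL (m₁ m₂ n : ℕ) (γ lam μ σlow σup : ℝ)
    (G G' G'' : ℝ → ℝ) (π : Fin m₁ × Fin m₂ → ℝ)
    (idx : Fin n → Fin m₁ × Fin m₂) (Y : Fin n → ℝ)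
    (Xb Xc : Matrix (Fin m₁) (Fin m₂) ℝ)
    (hγ : 0 < γ)
    -- Assumption H1
    (hG' : ∀ x ∈ Set.Icc (-γ) γ, HasDerivAt G (G' x) x)
    (hG'' : ∀ x ∈ Set.Icc (-γ) γ, HasDerivAt G' (G'' x) x)
    (hσlow : 0 < σlow) (hσord : σlow ≤ σup)
    (hcurv : ∀ x ∈ Set.Icc (-γ) γ, σlow ^ 2 ≤ G'' x ∧ G'' x ≤ σup ^ 2)
    -- Assumption H2 (Π is a sampling distribution bounded below)
    (hμ : 1 ≤ μ) (hπ0 : ∀ p, 0 ≤ π p) (hπsum : ∑ p, π p = 1)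
    (hπ : ∀ p : Fin m₁ × Fin m₂, 1 / (μ * m₁ * m₂) ≤ π p)
    -- λ dominates the operator norm of the gradient of L^Π at X̄
    (hlam : opNorm (gradLPi π G' idx Y Xb) ≤ lam)
    -- X̌ minimizes X ↦ L^Π(X) + λ‖X‖_{σ,1} over {‖X‖_∞ ≤ γ}
    (hXc : linfNorm Xc ≤ γ)
    (hmin : ∀ X : Matrix (Fin m₁) (Fin m₂) ℝ, linfNorm X ≤ γ →
      LPi π G idx Y Xc + lam * nucNorm Xc ≤ LPi π G idx Y X + lam * nucNorm X) :
    ∀ X : Matrix (Fin m₁) (Fin m₂) ℝ, linfNorm X ≤ γ →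
      bregPi π G G' Xc Xb ≤ bregPi π G G' X Xb + 2 * lam * nucNorm X :=
  oracle_ineq_KL_general m₁ m₂ n γ lam G G' π idx Y Xb Xc hlam hmin
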